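/- arXiv:1507.01534 — 3 statements merged into one kernel-verified Lean document; each statement's English description precedes it below -/
import Mathlib

section
/- Let f ∈ Lie[x,y] be homogeneous of even weight n ≥ 4 with coefficients satisfying the depth-2 stuffle relations (f|x^i y x^{n−2−i} y)+(f|x^{n−2−i} y x^i y)+(f|x^{n−1} y)=0 for all 0 ≤ i ≤ n−2. Then (f|x^{n−1}y) = 0; i.e., there is no element of ds of depth 1 in even weight. -/
noncomputable section

attribute [local instance] LieRing.ofAssociativeRing

/-- `ℚ⟨x,y⟩`, realized as the monoid algebra of the free monoid on `{x, y}`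
(`x` is the letter `true`, `y` is the letter `false`). -/
abbrev QXY := MonoidAlgebra ℚ (FreeMonoid Bool)

/-- The generator `x`. -/
def Xgen : QXY := MonoidAlgebra.of ℚ (FreeMonoid Bool) (FreeMonoid.of true)

/-- The generator `y`. -/
def Ygen : QXY := MonoidAlgebra.of ℚ (FreeMonoid Bool) (FreeMonoid.of false)

/-- `Lie[x,y]`: the Lie subalgebra of `ℚ⟨x,y⟩` (with the commutator bracket)
generated by `x` and `y`. -/
def LieXY : LieSubalgebra ℚ QXY := LieSubalgebra.lieSpan ℚ QXY {Xgen, Ygen}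

/-- The word `x^i y x^j y`. -/
def wxyxy (i j : ℕ) : FreeMonoid Bool :=
  FreeMonoid.ofList (List.replicate i true ++ [false] ++ List.replicate j true ++ [false])

/-- The word `x^{n−1} y`. -/
def wxy (n : ℕ) : FreeMonoid Bool :=
  FreeMonoid.ofList (List.replicate (n - 1) true ++ [false])


/-! Write `m = n - 2`, `A i = (f | x^i y x^(m-i) y)` and `c = (f | x^(n-1) y)`.
The anti-automorphism sending each letter `a` to `-a` negates every Lie polynomial, so the
coefficient of the even-length palindrome `y x^m y` vanishes: `A 0 = 0`. The derivation `∂_y`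
with `∂_y x = 0`, `∂_y y = 1` maps Lie polynomials to scalars, so the coefficients of the words
obtained by inserting a `y` into a nonempty word `u` sum to zero; for `u = x^m y` this reads
`∑ A i + A m = 0`. The stuffle relations `A i + A (m - i) + c = 0` give `A m = -c`, and summed
over `i` they give `2 ∑ A i + (m + 1) c = 0`, hence `(m + 3) c = 0`. -/

open MulOpposite TrivSqZeroExt

section LieSpan

variable {R A : Type*} [CommRing R] [Ring A] [Algebra R A] {s : Set A} {g : A}

theorem AlgHom.apply_eq_op_neg_of_mem_lieSpan (φ : A →ₐ[R] Aᵐᵒᵖ)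
    (hs : ∀ z ∈ s, φ z = op (-z)) (hg : g ∈ LieSubalgebra.lieSpan R A s) :
    φ g = op (-g) := by
  induction hg using LieSubalgebra.lieSpan_induction with
  | mem z hz => exact hs z hz
  | zero => simp
  | add a b _ _ ha hb => rw [map_add, ha, hb, neg_add, op_add]
  | smul r a _ ha => rw [map_smul, ha, ← op_smul, smul_neg]
  | lie a b _ _ ha hb =>
    rw [Ring.lie_def, map_sub, map_mul, map_mul, ha, hb, ← op_mul, ← op_mul, ← op_sub]
    congr 1
    noncomm_ring

theorem AlgHom.snd_mem_bot_of_mem_lieSpan (ψ : A →ₐ[R] TrivSqZeroExt A A)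
    (hψ : ∀ a, (ψ a).fst = a) (hs : ∀ z ∈ s, (ψ z).snd ∈ (⊥ : Subalgebra R A))
    (hg : g ∈ LieSubalgebra.lieSpan R A s) : (ψ g).snd ∈ (⊥ : Subalgebra R A) := by
  induction hg using LieSubalgebra.lieSpan_induction with
  | mem z hz => exact hs z hz
  | zero => simp
  | add a b _ _ ha hb => simpa using add_mem ha hb
  | smul r a _ ha => simpa using Subalgebra.smul_mem _ ha r
  | lie a b _ _ ha hb =>
    obtain ⟨c, hc⟩ := Algebra.mem_bot.mp ha
    obtain ⟨d, hd⟩ := Algebra.mem_bot.mp hb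
    -- `(ψ ⁅a, b⁆).snd = ⁅a, (ψ b).snd⁆ + ⁅(ψ a).snd, b⁆`, and scalars are central.
    have hlie : (ψ ⁅a, b⁆).snd = 0 := by
      rw [Ring.lie_def, map_sub, map_mul, map_mul, snd_sub, snd_mul, snd_mul, hψ, hψ, ← hc,
        ← hd, smul_eq_mul, smul_eq_mul, op_smul_eq_mul, op_smul_eq_mul, Algebra.commutes c b,
        Algebra.commutes d a]
      abel
    rw [hlie]
    exact zero_mem _

end LieSpan

namespace FreeMonoid

variable {R α : Type*} [CommRing R]

theorem reverse_ofList (l : List α) : (ofList l).reverse = ofList l.reverse := rfl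

theorem length_ofList (l : List α) : (ofList l).length = l.length := rfl

theorem coeff_algebraMap_ofList (r : R) {u : List α} (hu : u ≠ []) :
    (algebraMap R (MonoidAlgebra R (FreeMonoid α)) r).coeff (ofList u) = 0 :=
  Finsupp.single_eq_of_ne fun h => hu (congrArg toList h)

def signedReverse :
    MonoidAlgebra R (FreeMonoid α) →ₐ[R] (MonoidAlgebra R (FreeMonoid α))ᵐᵒᵖ :=
  MonoidAlgebra.lift R _ _ (lift fun a => op (-MonoidAlgebra.of R _ (of a)))

theorem signedReverse_single (w : FreeMonoid α) (r : R) :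
    signedReverse (MonoidAlgebra.single w r) =
      op (MonoidAlgebra.single w.reverse ((-1) ^ w.length * r)) := by
  induction w using FreeMonoid.inductionOn' generalizing r with
  | one =>
    rw [length_one, pow_zero, one_mul]
    exact (signedReverse (R := R) (α := α)).commutes r
  | of_mul a w ih =>
    have hof : signedReverse (MonoidAlgebra.single (of a) (1 : R)) =
        op (MonoidAlgebra.single (of a) (-1)) := by
      rw [signedReverse, MonoidAlgebra.lift_single, one_smul, lift_eval_of,
        MonoidAlgebra.of_apply, MonoidAlgebra.single_neg]
    rw [← one_mul r, ← MonoidAlgebra.single_mul_single, map_mul, ih, hof, ← op_mul,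
      MonoidAlgebra.single_mul_single, reverse_mul, reverse_of, length_mul, length_of, pow_add]
    ring_nf

theorem coeff_unop_signedReverse (g : MonoidAlgebra R (FreeMonoid α)) (w : FreeMonoid α) :
    (unop (signedReverse g)).coeff w = (-1) ^ w.length * g.coeff w.reverse := by
  induction g using MonoidAlgebra.induction_linear with
  | zero => simp
  | add p q hp hq =>
    simp only [map_add, unop_add, MonoidAlgebra.coeff_add, Finsupp.add_apply, hp, hq, mul_add]
  | single v r =>
    rw [signedReverse_single, unop_op, MonoidAlgebra.coeff_single, MonoidAlgebra.coeff_single]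
    by_cases h : v = w.reverse
    · simp [h]
    · have h' : v.reverse ≠ w := fun hv => h (by rw [← hv, reverse_reverse])
      simp [h, h']

section LetterDeriv

variable [DecidableEq α] (a : α)

theorem coeff_of_mul_of_mul (b c : α) (p : MonoidAlgebra R (FreeMonoid α)) (v : FreeMonoid α) :
    (MonoidAlgebra.of R _ (of b) * p).coeff (of c * v) = if b = c then p.coeff v else 0 := by
  split_ifs with h
  · rw [h, MonoidAlgebra.of_apply, MonoidAlgebra.coeff_single_mul_mul, one_mul]
  · refine MonoidAlgebra.coeff_single_mul_of_forall_mul_ne _ _ fun d hd => h ?_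
    exact (List.cons.inj (congrArg toList hd)).1

/-- `g ↦ (g, ∂ₐ g)`, where `∂ₐ` is the derivation with `∂ₐ a = 1` and `∂ₐ b = 0`
for `b ≠ a`. -/
def withLetterDeriv : MonoidAlgebra R (FreeMonoid α) →ₐ[R]
    TrivSqZeroExt (MonoidAlgebra R (FreeMonoid α)) (MonoidAlgebra R (FreeMonoid α)) :=
  MonoidAlgebra.lift R _ _
    (lift fun b => inl (MonoidAlgebra.of R _ (of b)) + inr (if b = a then 1 else 0))

theorem withLetterDeriv_of (b : α) :
    withLetterDeriv a (MonoidAlgebra.of R _ (of b)) =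
      inl (MonoidAlgebra.of R _ (of b)) + inr (if b = a then 1 else 0) := by
  rw [withLetterDeriv, MonoidAlgebra.lift_of, lift_eval_of]

theorem fst_withLetterDeriv (g : MonoidAlgebra R (FreeMonoid α)) :
    (withLetterDeriv a g).fst = g := by
  suffices (fstHom R _ _).comp (withLetterDeriv a) = AlgHom.id R _ from
    DFunLike.congr_fun this g
  refine MonoidAlgebra.algHom_ext' (hom_eq fun b => ?_) (Subsingleton.elim _ _)
  change (withLetterDeriv a (MonoidAlgebra.of R _ (of b))).fst = MonoidAlgebra.of R _ (of b)
  rw [withLetterDeriv_of, fst_add, fst_inl, fst_inr, add_zero]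

theorem snd_withLetterDeriv_of_mul (b : α) (p : MonoidAlgebra R (FreeMonoid α)) :
    (withLetterDeriv a (MonoidAlgebra.of R _ (of b) * p)).snd =
      MonoidAlgebra.of R _ (of b) * (withLetterDeriv a p).snd + if b = a then p else 0 := by
  rw [map_mul, snd_mul, withLetterDeriv_of, fst_withLetterDeriv]
  split_ifs <;> simp

theorem coeff_snd_withLetterDeriv (g : MonoidAlgebra R (FreeMonoid α)) (u : List α) :
    (withLetterDeriv a g).snd.coeff (ofList u) =
      ∑ j ∈ Finset.range (u.length + 1), g.coeff (ofList (u.insertIdx j a)) := by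
  induction g using MonoidAlgebra.induction_linear generalizing u with
  | zero => simp
  | add p q hp hq => simp [hp, hq, Finset.sum_add_distrib]
  | single w r =>
    induction w using FreeMonoid.inductionOn' generalizing r u with
    | one =>
      have h0 : (withLetterDeriv a (MonoidAlgebra.single (1 : FreeMonoid α) r)).snd = 0 := by
        simpa [algebraMap_eq_inl'] using congrArg snd ((withLetterDeriv a).commutes r)
      rw [h0, MonoidAlgebra.coeff_zero, Finsupp.zero_apply, eq_comm]
      refine Finset.sum_eq_zero fun j hj => coeff_algebraMap_ofList r ?_
      rw [← List.length_pos_iff,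
        List.length_insertIdx_of_le_length (Nat.lt_succ_iff.mp (Finset.mem_range.mp hj))]
      exact Nat.succ_pos _
    | of_mul b w ih =>
      rw [← one_mul r, ← MonoidAlgebra.single_mul_single, ← MonoidAlgebra.of_apply,
        snd_withLetterDeriv_of_mul, Finset.sum_range_succ', List.insertIdx_zero, ofList_cons,
        coeff_of_mul_of_mul, MonoidAlgebra.coeff_add, Finsupp.add_apply]
      congr 1
      swap
      · split_ifs <;> simp
      cases u with
      | nil => simp
      | cons c u =>
        simp only [List.insertIdx_succ_cons, ofList_cons, coeff_of_mul_of_mul, ih,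
          List.length_cons]
        split_ifs <;> simp

end LetterDeriv

variable {s : Set (MonoidAlgebra R (FreeMonoid α))} {g : MonoidAlgebra R (FreeMonoid α)}

theorem coeff_reverse_of_mem_lieSpan
    (hs : s ⊆ Set.range fun a => MonoidAlgebra.of R (FreeMonoid α) (of a))
    (hg : g ∈ LieSubalgebra.lieSpan R _ s) (w : FreeMonoid α) :
    g.coeff w.reverse = -(-1) ^ w.length * g.coeff w := by
  have hneg : signedReverse g = op (-g) := by
    refine signedReverse.apply_eq_op_neg_of_mem_lieSpan (fun z hz => ?_) hg
    obtain ⟨a, rfl⟩ := hs hz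
    rw [signedReverse, MonoidAlgebra.lift_of, lift_eval_of]
  have h := coeff_unop_signedReverse g w
  rw [hneg, unop_op, MonoidAlgebra.coeff_neg, Finsupp.neg_apply] at h
  have hsq : ((-1 : R) ^ w.length) ^ 2 = 1 := by rw [← pow_mul, pow_mul', neg_one_sq, one_pow]
  linear_combination (-(-1 : R) ^ w.length) * h - g.coeff w.reverse * hsq

theorem coeff_eq_zero_of_reverse_eq [NoZeroDivisors R] [CharZero R]
    (hs : s ⊆ Set.range fun a => MonoidAlgebra.of R (FreeMonoid α) (of a))
    (hg : g ∈ LieSubalgebra.lieSpan R _ s) {w : FreeMonoid α} (hw : w.reverse = w)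
    (heven : Even w.length) : g.coeff w = 0 := by
  have h := coeff_reverse_of_mem_lieSpan hs hg w
  rwa [hw, heven.neg_one_pow, neg_one_mul, CharZero.eq_neg_self_iff] at h

theorem sum_coeff_insertIdx_eq_zero_of_mem_lieSpan [DecidableEq α] (a : α)
    (hs : s ⊆ Set.range fun a => MonoidAlgebra.of R (FreeMonoid α) (of a))
    (hg : g ∈ LieSubalgebra.lieSpan R _ s) {u : List α} (hu : u ≠ []) :
    ∑ j ∈ Finset.range (u.length + 1), g.coeff (ofList (u.insertIdx j a)) = 0 := by
  have hbot := (withLetterDeriv a).snd_mem_bot_of_mem_lieSpan (fst_withLetterDeriv a)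
    (fun z hz => ?_) hg
  · obtain ⟨c, hc⟩ := Algebra.mem_bot.mp hbot
    rw [← coeff_snd_withLetterDeriv, ← hc, coeff_algebraMap_ofList c hu]
  · obtain ⟨b, rfl⟩ := hs hz
    rw [withLetterDeriv_of, snd_add, snd_inl, snd_inr, zero_add]
    split_ifs
    exacts [one_mem _, zero_mem _]

end FreeMonoid

theorem List.insertIdx_replicate_append {α : Type*} (x y : α) {m j : ℕ} (hj : j ≤ m) :
    (replicate m x ++ [y]).insertIdx j y = replicate j x ++ [y] ++ replicate (m - j) x ++ [y] := by
  induction j generalizing m with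
  | zero => simp
  | succ j ih =>
    obtain ⟨m, rfl⟩ : ∃ k, m = k + 1 := ⟨m - 1, by omega⟩
    rw [replicate_succ, cons_append, insertIdx_succ_cons, ih (by omega)]
    simp [replicate_succ]

theorem eq_zero_of_forall_add_reflect_add_eq_zero {K : Type*} [Field K] [CharZero K]
    {A : ℕ → K} {c : K} {m : ℕ} (hrefl : ∀ i ≤ m, A i + A (m - i) + c = 0) (h0 : A 0 = 0)
    (hsum : ∑ i ∈ Finset.range (m + 1), A i + A m = 0) : c = 0 := by
  have hAm : A m = -c := by linear_combination (by simpa [h0] using hrefl m le_rfl : A m + c = 0)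
  have hreflect :
      ∑ i ∈ Finset.range (m + 1), A (m - i) = ∑ i ∈ Finset.range (m + 1), A i := by
    simpa using Finset.sum_range_reflect A (m + 1)
  have htotal : ∑ i ∈ Finset.range (m + 1), (A i + A (m - i) + c) = 0 :=
    Finset.sum_eq_zero fun i hi => hrefl i (Nat.lt_succ_iff.mp (Finset.mem_range.mp hi))
  rw [Finset.sum_add_distrib, Finset.sum_add_distrib, hreflect, Finset.sum_const,
    Finset.card_range, nsmul_eq_mul, Nat.cast_succ] at htotal
  have hm : ((m : K) + 3) * c = 0 := by linear_combination htotal - 2 * hsum + 2 * hAm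
  exact (mul_eq_zero.mp hm).resolve_left (by exact_mod_cast Nat.succ_ne_zero (m + 2))

theorem no_depth_one_in_even_weight_general (f : QXY) (n : ℕ) (hn : 4 ≤ n) (hne : Even n)
    (hf : f ∈ LieXY)
    (hstuffle : ∀ i : ℕ, i ≤ n - 2 →
        f.coeff (wxyxy i (n - 2 - i)) + f.coeff (wxyxy (n - 2 - i) i) + f.coeff (wxy n) = 0) :
    f.coeff (wxy n) = 0 := by
  obtain ⟨m, rfl⟩ : ∃ m, n = m + 2 := ⟨n - 2, by omega⟩
  have hgen : {Xgen, Ygen} ⊆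
      Set.range fun a => MonoidAlgebra.of ℚ (FreeMonoid Bool) (FreeMonoid.of a) := by
    rintro _ (rfl | rfl) <;> exact ⟨_, rfl⟩
  refine eq_zero_of_forall_add_reflect_add_eq_zero (m := m)
    (A := fun i => f.coeff (wxyxy i (m - i))) (fun i hi => ?_) ?_ ?_
  · simpa [Nat.sub_sub_self hi] using hstuffle i (by omega)
  · refine FreeMonoid.coeff_eq_zero_of_reverse_eq hgen hf ?_ ?_
    · rw [wxyxy, FreeMonoid.reverse_ofList]
      simp
    · convert hne using 1
      simp [wxyxy, FreeMonoid.length_ofList]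
      omega
  · have h := FreeMonoid.sum_coeff_insertIdx_eq_zero_of_mem_lieSpan false hgen hf
      (u := List.replicate m true ++ [false]) (by simp)
    rw [Finset.sum_range_succ, List.insertIdx_length_self, List.length_append,
      List.length_replicate, List.length_singleton] at h
    convert h using 2
    · refine Finset.sum_congr rfl fun i hi => ?_
      rw [List.insertIdx_replicate_append _ _ (Nat.lt_succ_iff.mp (Finset.mem_range.mp hi))]
      rfl
    · simp [wxyxy]

/-- a homogeneous Lie element of even weight `n ≥ 4` whose coefficients
satisfy the depth-2 stuffle relations has vanishing depth-1 coefficient `(f | x^{n−1}y)`;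
i.e. there is no depth-1 element of `ds` in even weight. -/
theorem no_depth_one_in_even_weight (f : QXY) (n : ℕ) (hn : 4 ≤ n) (hne : Even n)
    (hf : f ∈ LieXY)
    (hhom : ∀ w ∈ f.coeff.support, (FreeMonoid.toList w).length = n)
    (hstuffle : ∀ i : ℕ, i ≤ n - 2 →
        f.coeff (wxyxy i (n - 2 - i)) + f.coeff (wxyxy (n - 2 - i) i) + f.coeff (wxy n) = 0) :
    f.coeff (wxy n) = 0 :=
  no_depth_one_in_even_weight_general f n hn hne hf hstuffle

end
end

section
/- If a bimould A is alternal and mantar-invariant (which holds for all alternal bimoulds) and its swap is also alternal, then A is invariant under neg ∘ push: (neg ∘ push)(A) = A. -/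
/-- A bimould: a function of words whose letters are pairs `wᵢ = (uᵢ, vᵢ)` of complex numbers. -/
abbrev Bimould := List (ℂ × ℂ) → ℂ

namespace Bimould

/-- Variable change for `neg`: negate all `u` and `v` variables. -/
def negWord (w : List (ℂ × ℂ)) : List (ℂ × ℂ) := w.map (fun p => (-p.1, -p.2))

/-- `neg` operator on bimoulds. -/
def neg (M : Bimould) : Bimould := fun w => M (negWord w)

/-- `anti` operator on bimoulds: reversal of the word. -/
def anti (M : Bimould) : Bimould := fun w => M w.reverse

/-- Variable change for `push`:
`push(M)(u₁,…,u_r; v₁,…,v_r) = M(−u₁−⋯−u_r, u₁,…,u_{r−1}; −v_r, v₁−v_r,…,v_{r−1}−v_r)`. -/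
def pushWord (w : List (ℂ × ℂ)) : List (ℂ × ℂ) :=
  match w with
  | [] => []
  | _ =>
    let r := w.length
    let u : ℕ → ℂ := fun i => (w.getD i (0, 0)).1
    let v : ℕ → ℂ := fun i => (w.getD i (0, 0)).2
    (-(w.map Prod.fst).sum, -(v (r - 1))) ::
      (List.range (r - 1)).map (fun i => (u i, v i - v (r - 1)))

/-- `push` operator on bimoulds. -/
def push (M : Bimould) : Bimould := fun w => M (pushWord w)

/-- Variable change for `swap`:
`swap(M)(u₁,…,u_r; v₁,…,v_r) = M(v_r, v_{r−1}−v_r,…,v₁−v₂; u₁+⋯+u_r, u₁+⋯+u_{r−1},…,u₁)`. -/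
def swapWord (w : List (ℂ × ℂ)) : List (ℂ × ℂ) :=
  let r := w.length
  let v : ℕ → ℂ := fun i => (w.getD i (0, 0)).2
  (List.range r).map (fun j =>
    (v (r - 1 - j) - (if j = 0 then 0 else v (r - j)),
     ((w.take (r - j)).map Prod.fst).sum))

/-- `swap` operator on bimoulds. -/
def swap (M : Bimould) : Bimould := fun w => M (swapWord w)

end Bimould

open Bimould in

/-- The list of all shuffles (with multiplicity) of two words. -/
def shuffles {α : Type*} : List α → List α → List (List α)
  | [], ys => [ys]
  | x :: xs, [] => [x :: xs]
  | x :: xs, y :: ys =>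
      ((shuffles xs (y :: ys)).map (x :: ·)) ++ ((shuffles (x :: xs) ys).map (y :: ·))
termination_by u v => u.length + v.length

/-- A bimould is alternal if all its shuffle sums vanish. -/
def Bimould.IsAlternal (M : Bimould) : Prop :=
  ∀ u v : List (ℂ × ℂ), u ≠ [] → v ≠ [] → ((shuffles u v).map M).sum = 0


/-!
Alternality forces mantar-invariance: splitting the shuffle sum of `x :: u` and `y :: v` by
first letter shows that moving one letter across a prefixed shuffle sum flips its sign, so
`M (x :: u) = (-1) ^ |u| * M (u.reverse ++ [x])`.

The `u`-components of `swapWord w` are the successive differences of the reversed `v`'s and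
its `v`-components are the reversed partial sums of the `u`'s. Partial sums and differences
are mutually inverse, so `swap` is an involution, and two telescoping identities give the word
identity behind `neg ∘ push = anti ∘ swap ∘ anti ∘ swap`. The signs `(-1) ^ (r - 1)` cancel in
pairs, so `neg (push A) = mantar (swap (mantar (swap A)))`, which collapses to `A` when both
`A` and `swap A` are alternal.
-/

namespace List

variable {α : Type*} [AddCommGroup α]

def partialSumsFrom : α → List α → List α
  | _, [] => []
  | c, x :: l => (c + x) :: partialSumsFrom (c + x) l

def differencesFrom : α → List α → List α
  | _, [] => []
  | c, x :: l => (x - c) :: differencesFrom x l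

def suffixSums (l : List α) : List α := (partialSumsFrom 0 l.reverse).reverse

@[simp]
theorem length_partialSumsFrom (c : α) (l : List α) : (partialSumsFrom c l).length = l.length := by
  induction l generalizing c <;> simp [partialSumsFrom, *]

@[simp]
theorem length_differencesFrom (c : α) (l : List α) :
    (differencesFrom c l).length = l.length := by
  induction l generalizing c <;> simp [differencesFrom, *]

theorem getElem_partialSumsFrom (c : α) (l : List α) {k : ℕ}
    (hk : k < (partialSumsFrom c l).length) :
    (partialSumsFrom c l)[k] = c + (l.take (k + 1)).sum := by
  induction l generalizing c k with
  | nil => simp at hk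
  | cons x l ih =>
    cases k with
    | zero => simp [partialSumsFrom]
    | succ k => simp [partialSumsFrom, ih, add_assoc]

theorem getElem_differencesFrom (c : α) (l : List α) {k : ℕ} (hk : k < l.length) :
    (differencesFrom c l)[k]'(by simpa using hk) = l[k] - (c :: l)[k]'(by simp; omega) := by
  induction l generalizing c k with
  | nil => simp at hk
  | cons x l ih =>
    cases k with
    | zero => simp [differencesFrom]
    | succ k => simpa [differencesFrom] using ih x (by simpa using hk)

theorem differencesFrom_partialSumsFrom (c : α) (l : List α) :
    differencesFrom c (partialSumsFrom c l) = l := by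
  induction l generalizing c <;> simp [partialSumsFrom, differencesFrom, *]

theorem partialSumsFrom_differencesFrom (c : α) (l : List α) :
    partialSumsFrom c (differencesFrom c l) = l := by
  induction l generalizing c <;> simp [partialSumsFrom, differencesFrom, *]

theorem sum_differencesFrom (c : α) (l : List α) :
    (differencesFrom c l).sum = (c :: l).getLast (cons_ne_nil c l) - c := by
  induction l generalizing c with
  | nil => simp [differencesFrom]
  | cons x l ih => simp [differencesFrom, ih]

theorem partialSumsFrom_concat (c a : α) (l : List α) :
    partialSumsFrom c (l ++ [a]) = partialSumsFrom c l ++ [c + l.sum + a] := by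
  induction l generalizing c with
  | nil => simp [partialSumsFrom]
  | cons x l ih => simp [partialSumsFrom, ih, add_assoc]

@[simp]
theorem suffixSums_nil : suffixSums ([] : List α) = [] := rfl

theorem suffixSums_cons (a : α) (l : List α) :
    suffixSums (a :: l) = (a + l.sum) :: suffixSums l := by
  simp [suffixSums, partialSumsFrom_concat, add_comm]

theorem differencesFrom_suffixSums (c : α) (l : List α) (hl : l ≠ []) :
    differencesFrom c (suffixSums l) = (l.sum - c) :: l.dropLast.map Neg.neg := by
  obtain ⟨a, l, rfl⟩ := exists_cons_of_ne_nil hl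
  induction l generalizing a c with
  | nil => simp [suffixSums_cons, differencesFrom]
  | cons b l ih =>
    rw [suffixSums_cons a, differencesFrom, ih _ _ (cons_ne_nil _ _)]
    simp

theorem suffixSums_differencesFrom (c : α) (l : List α) :
    suffixSums (differencesFrom c l) =
      (c :: l).dropLast.map ((c :: l).getLast (cons_ne_nil c l) - ·) := by
  induction l generalizing c with
  | nil => simp [differencesFrom]
  | cons x l ih => simp [differencesFrom, suffixSums_cons, ih, sum_differencesFrom]

theorem eq_of_map_fst_eq_of_map_snd_eq {β γ : Type*} {l l' : List (β × γ)}
    (hfst : l.map Prod.fst = l'.map Prod.fst) (hsnd : l.map Prod.snd = l'.map Prod.snd) :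
    l = l' := by
  rw [← zip_unzip l, ← zip_unzip l', unzip_eq_map, unzip_eq_map, hfst, hsnd]

end List

namespace Bimould
open List

@[simp]
theorem length_swapWord (w : List (ℂ × ℂ)) : (swapWord w).length = w.length := by
  simp [swapWord]

theorem map_fst_swapWord (w : List (ℂ × ℂ)) :
    (swapWord w).map Prod.fst = differencesFrom 0 (w.map Prod.snd).reverse := by
  refine List.ext_getElem (by simp) fun j h _ => ?_
  simp only [length_map, length_swapWord] at h
  rw [getElem_differencesFrom _ _ (by simpa using h)]
  rcases j with _ | j
  · simp [swapWord, h]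
  · have e : w.length - (j + 1) = w.length - 1 - j := by omega
    simp (disch := omega) [swapWord, getElem_reverse, e]

theorem map_snd_swapWord (w : List (ℂ × ℂ)) :
    (swapWord w).map Prod.snd = (partialSumsFrom 0 (w.map Prod.fst)).reverse := by
  refine List.ext_getElem (by simp) fun j h _ => ?_
  simp only [length_map, length_swapWord] at h
  have e : w.length - 1 - j + 1 = w.length - j := by omega
  simp [swapWord, getElem_partialSumsFrom, getElem_reverse, e]

theorem pushWord_eq (w : List (ℂ × ℂ)) (hw : w ≠ []) :
    pushWord w = (-(w.map Prod.fst).sum, -(w.getLast hw).2) ::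
      w.dropLast.map (fun p => (p.1, p.2 - (w.getLast hw).2)) := by
  obtain ⟨x, l, rfl⟩ := List.exists_cons_of_ne_nil hw
  simp only [pushWord]
  congr 1
  · simp [getLast_eq_getElem]
  · refine List.ext_getElem (by simp) fun j h _ => ?_
    simp only [length_map, length_range, length_cons, Nat.add_sub_cancel] at h
    rcases j with _ | j <;> simp (disch := grind) [getLast_eq_getElem]

theorem swapWord_swapWord (w : List (ℂ × ℂ)) : swapWord (swapWord w) = w :=
  eq_of_map_fst_eq_of_map_snd_eq
    (by rw [map_fst_swapWord, map_snd_swapWord, reverse_reverse, differencesFrom_partialSumsFrom])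
    (by rw [map_snd_swapWord, map_fst_swapWord, partialSumsFrom_differencesFrom, reverse_reverse])

theorem swap_swap (M : Bimould) : swap (swap M) = M := by
  funext w
  simp only [swap, swapWord_swapWord]

theorem pushWord_negWord_eq (w : List (ℂ × ℂ)) (hw : w ≠ []) :
    pushWord (negWord w) = ((w.map Prod.fst).sum, (w.getLast hw).2) ::
      w.dropLast.map (fun p => (-p.1, (w.getLast hw).2 - p.2)) := by
  rw [pushWord_eq _ (by simpa [negWord] using hw)]
  simp [negWord, getLast_map, ← map_dropLast, Function.comp_def, sum_neg, neg_add_eq_sub]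

theorem pushWord_negWord (w : List (ℂ × ℂ)) :
    pushWord (negWord w) = swapWord (swapWord w.reverse).reverse := by
  rcases eq_or_ne w [] with rfl | hw
  · rfl
  refine eq_of_map_fst_eq_of_map_snd_eq ?_ ?_
  · rw [pushWord_negWord_eq w hw, map_fst_swapWord, map_reverse, reverse_reverse, map_snd_swapWord,
      map_reverse, ← suffixSums.eq_1, differencesFrom_suffixSums _ _ (by simpa using hw)]
    simp [map_dropLast, Function.comp_def]
  · rw [pushWord_negWord_eq w hw, map_snd_swapWord, map_reverse, map_fst_swapWord, map_reverse,
      reverse_reverse, ← suffixSums.eq_1, suffixSums_differencesFrom,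
      dropLast_cons_of_ne_nil (by simpa using hw), getLast_cons (by simpa using hw)]
    simp [map_dropLast, getLast_map, Function.comp_def]

-- In `ℕ`, `0 - 1 = 0`: on the empty word the sign is `1`, so `mantar M [] = M []`.
def mantar (M : Bimould) : Bimould := fun w => (-1) ^ (w.length - 1) * M w.reverse

theorem neg_push (M : Bimould) : neg (push M) = mantar (swap (mantar (swap M))) := by
  funext w
  have hsign : ((-1 : ℂ) ^ (w.length - 1)) * (-1) ^ (w.length - 1) = 1 := by
    rw [← mul_pow]; norm_num
  simp only [neg, push, mantar, swap, length_reverse, length_swapWord, pushWord_negWord,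
    ← mul_assoc, hsign, one_mul]

end Bimould

theorem shuffles_nil_left {α : Type*} (v : List α) : shuffles [] v = [v] := by
  rw [shuffles]

theorem shuffles_nil_right {α : Type*} (u : List α) : shuffles u [] = [u] := by
  cases u <;> rw [shuffles]

theorem shuffles_cons_cons {α : Type*} (x y : α) (u v : List α) :
    shuffles (x :: u) (y :: v) =
      (shuffles u (y :: v)).map (x :: ·) ++ (shuffles (x :: u) v).map (y :: ·) := by
  rw [shuffles]

namespace Bimould.IsAlternal

open List

variable {M : Bimould}

theorem sum_shuffles_cons_eq_neg (hM : M.IsAlternal) (x y : ℂ × ℂ) (u v : List (ℂ × ℂ)) :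
    ((shuffles u (y :: v)).map (fun s => M (x :: s))).sum =
      -((shuffles (x :: u) v).map (fun s => M (y :: s))).sum := by
  have h := hM (x :: u) (y :: v) (cons_ne_nil _ _) (cons_ne_nil _ _)
  rw [shuffles_cons_cons, map_append, sum_append, map_map, map_map] at h
  exact eq_neg_of_add_eq_zero_left h

theorem sum_shuffles_cons (hM : M.IsAlternal) (x : ℂ × ℂ) (u v : List (ℂ × ℂ)) :
    ((shuffles u v).map (fun s => M (x :: s))).sum = (-1) ^ u.length * M (u.reverse ++ x :: v) := by
  induction u generalizing x v with
  | nil => simp [shuffles_nil_left]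
  | cons y u ih =>
    rw [← neg_eq_iff_eq_neg.mpr (hM.sum_shuffles_cons_eq_neg y x u v), ih]
    simp [pow_succ]

theorem mantar_eq (hM : M.IsAlternal) : mantar M = M := by
  funext w
  rcases eq_nil_or_concat w with rfl | ⟨c, x, rfl⟩
  · simp [mantar]
  have h := hM.sum_shuffles_cons x c.reverse []
  simp only [shuffles_nil_right, map_cons, map_nil, sum_cons, sum_nil, add_zero,
    reverse_reverse, length_reverse] at h
  simp [mantar, h, ← mul_assoc, ← mul_pow]

end Bimould.IsAlternal

theorem neg_push_invariance_of_alternal_with_alternal_swap_general (A : Bimould)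
    (hal : A.IsAlternal) (hswapal : (Bimould.swap A).IsAlternal) :
    Bimould.neg (Bimould.push A) = A := by
  rw [Bimould.neg_push, hswapal.mantar_eq, Bimould.swap_swap, hal.mantar_eq]

/-- an alternal bimould (hence mantar-invariant) whose swap is also
alternal is invariant under `neg ∘ push`. -/
theorem neg_push_invariance_of_alternal_with_alternal_swap (A : Bimould)
    (h0 : A [] = 0) (hal : A.IsAlternal) (hswapal : (Bimould.swap A).IsAlternal) :
    Bimould.neg (Bimould.push A) = A :=
  neg_push_invariance_of_alternal_with_alternal_swap_general A hal hswapal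
end

section
/- Let A be a bimould concentrated in odd depth d = 2s+1 ≥ 3 which is alternal, odd under neg (neg(A) = −A), and invariant under neg ∘ push. Then A = 0. -/
/-!
Extend a word `w` of length `d` by the letter `w₀ = (-∑ uᵢ, 0)` and read `A` on cyclic words of
length `d + 1` through `onCycle`. Since `neg` negates `A` and `neg ∘ push` fixes it, `push A = -A`,
which makes `onCycle A` change sign under each cyclic rotation. Inserting `w₀` into a word is a
rotation up to sign, so the shuffle relations `sh((w₀), (w'))` say that for
`F k = onCycle A (w₀ :: w.rotate k)` every window of `d` consecutive values of `F`, taken with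
alternating signs, sums to zero. As `F` is `d`-periodic and `d` is odd, two adjacent windows
differ by `2 F 0 = 2 A w`.
-/

namespace List

variable {α : Type*}

theorem insertIdx_eq_take_append_cons_drop (x : α) :
    ∀ {m : ℕ} {l : List α}, m ≤ l.length → l.insertIdx m x = l.take m ++ x :: l.drop m
  | 0, _, _ => rfl
  | _ + 1, [], h => absurd h (by simp)
  | m + 1, c :: l, h => by
    rw [insertIdx_succ_cons, insertIdx_eq_take_append_cons_drop x (by simpa using h)]
    rfl

theorem rotate_insertIdx_self (x : α) {m : ℕ} {l : List α} (h : m ≤ l.length) :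
    (l.insertIdx m x).rotate m = x :: l.rotate m := by
  have hrot := rotate_append_length_eq (l.take m) (x :: l.drop m)
  rw [length_take_of_le h] at hrot
  rw [insertIdx_eq_take_append_cons_drop x h, hrot, rotate_eq_drop_append_take h, cons_append]

theorem sum_map_range_eq_sum_range {M : Type*} [AddCommMonoid M] (f : ℕ → M) (n : ℕ) :
    ((range n).map f).sum = ∑ i ∈ Finset.range n, f i := by
  rw [Finset.sum_eq_multiset_sum]
  rfl

theorem sum_map_rotate {M : Type*} [AddCommMonoid M] (f : α → M) (l : List α) (k : ℕ) :
    ((l.rotate k).map f).sum = (l.map f).sum :=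
  ((l.rotate_perm k).map f).sum_eq

end List

theorem shuffles_singleton_left {α : Type*} (a : α) (b : List α) :
    shuffles [a] b = (List.range (b.length + 1)).map (b.insertIdx · a) := by
  induction b with
  | nil => rw [shuffles]; rfl
  | cons y ys ih =>
    rw [shuffles, ih, List.length_cons, @List.range_succ_eq_map (ys.length + 1)]
    simp [shuffles, Function.comp_def, List.insertIdx_succ_cons]

theorem eq_zero_of_alternating_sum_eq_zero {R : Type*} [CommRing R] [NoZeroDivisors R]
    [CharZero R] (F : ℕ → R) {d : ℕ} (hd : Odd d) (hper : F d = F 0)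
    (h₀ : ∑ i ∈ Finset.range d, (-1) ^ i * F i = 0)
    (h₁ : ∑ i ∈ Finset.range d, (-1) ^ i * F (i + 1) = 0) :
    F 0 = 0 := by
  have htel := Finset.sum_range_succ' (fun i => (-1 : R) ^ i * F i) d
  simp only [Finset.sum_range_succ, h₀, hd.neg_one_pow, hper, pow_succ, pow_zero] at htel
  simp only [mul_neg_one, neg_mul, Finset.sum_neg_distrib, h₁] at htel
  have h2 : (2 : R) * F 0 = 0 := by linear_combination -htel
  simpa using h2

namespace Bimould

theorem negWord_negWord (w : List (ℂ × ℂ)) : negWord (negWord w) = w := by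
  simp [negWord, Function.comp_def]

theorem push_eq_neg_of_neg_push_eq {A : Bimould} (hodd : neg A = -A) (hinv : neg (push A) = A) :
    push A = -A := by
  funext w
  have h := congrFun hinv (negWord w)
  simp only [neg, negWord_negWord] at h
  rw [Pi.neg_apply, h]
  exact congrFun hodd w

theorem apply_nil_eq_zero_of_push_eq_neg {A : Bimould} (hpush : push A = -A) : A [] = 0 := by
  have h := congrFun hpush []
  simp only [push, pushWord, Pi.neg_apply] at h
  linear_combination h / 2

theorem pushWord_append_singleton (l : List (ℂ × ℂ)) (p : ℂ × ℂ) :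
    pushWord (l ++ [p]) =
      (-((l ++ [p]).map Prod.fst).sum, -p.2) :: l.map (fun q => (q.1, q.2 - p.2)) := by
  unfold pushWord
  split
  · simp_all
  · refine List.cons_eq_cons.2 ⟨by simp, List.ext_getElem (by simp) fun i h₁ h₂ => ?_⟩
    simp only [List.length_map] at h₂
    simp [List.getElem?_append_left h₂, h₂]

/-- Evaluation of `A` on a cyclic word `(c, z₁, …, z_r)` with base point `c`: the `v`-variables are
measured from `c`. For a word with vanishing `u`-sum, `push` acts on this encoding as the cyclic
rotation (`onCycle_rotate_one`). -/
def onCycle (A : Bimould) : List (ℂ × ℂ) → ℂ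
  | [] => 0
  | c :: z => A (z.map fun p => (p.1, p.2 - c.2))

theorem onCycle_rotate_one {A : Bimould} (hpush : push A = -A) :
    ∀ {l : List (ℂ × ℂ)}, (l.map Prod.fst).sum = 0 → onCycle A (l.rotate 1) = -onCycle A l
  | [], _ => by simp [onCycle]
  | [c], _ => by simp [onCycle, apply_nil_eq_zero_of_push_eq_neg hpush]
  | c :: z :: t, hl => by
    have hW : pushWord ((t ++ [c]).map fun p => (p.1, p.2 - z.2)) =
        (z :: t).map fun p => (p.1, p.2 - c.2) := by
      rw [List.map_append, List.map_singleton, pushWord_append_singleton, List.map_cons]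
      refine List.cons_eq_cons.2 ⟨Prod.ext ?_ (neg_sub _ _), by simp [Function.comp_def]⟩
      simp only [List.map_cons, List.sum_cons] at hl
      simp only [List.map_append, List.map_map, Function.comp_def, List.map_cons, List.map_nil,
        List.sum_append, List.sum_cons, List.sum_nil, add_zero]
      linear_combination -hl
    have h := congrFun hpush ((t ++ [c]).map fun p => (p.1, p.2 - z.2))
    rw [push, hW, Pi.neg_apply] at h
    simp only [List.rotate_cons_succ, List.rotate_zero, List.cons_append, onCycle]
    rw [h, neg_neg]

theorem onCycle_rotate {A : Bimould} (hpush : push A = -A) {l : List (ℂ × ℂ)}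
    (hl : (l.map Prod.fst).sum = 0) (k : ℕ) :
    onCycle A (l.rotate k) = (-1) ^ k * onCycle A l := by
  induction k with
  | zero => simp
  | succ k ih =>
    rw [← List.rotate_rotate, onCycle_rotate_one hpush (by rwa [List.sum_map_rotate]), ih,
      pow_succ]
    ring

theorem onCycle_insertIdx {A : Bimould} (hpush : push A = -A) {l : List (ℂ × ℂ)} {x : ℂ × ℂ}
    (hx : x.1 + (l.map Prod.fst).sum = 0) {m : ℕ} (hm : m ≤ l.length) :
    onCycle A (l.insertIdx m x) = (-1) ^ m * onCycle A (x :: l.rotate m) := by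
  have hsum : ((l.insertIdx m x).map Prod.fst).sum = 0 := by
    rw [((l.perm_insertIdx x hm).map _).sum_eq, List.map_cons, List.sum_cons, hx]
  rw [← List.rotate_insertIdx_self x hm, onCycle_rotate hpush hsum, ← mul_assoc, ← mul_pow]
  simp

theorem IsAlternal.sum_onCycle_insertIdx_succ {A : Bimould} (hal : A.IsAlternal)
    (x y : ℂ × ℂ) {t : List (ℂ × ℂ)} (ht : t ≠ []) :
    ∑ i ∈ Finset.range (t.length + 1), onCycle A ((y :: t).insertIdx (i + 1) x) = 0 := by
  have h := hal [(x.1, x.2 - y.2)] (t.map fun p => (p.1, p.2 - y.2)) (by simp) (by simpa using ht)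
  rw [shuffles_singleton_left, List.map_map, List.sum_map_range_eq_sum_range,
    List.length_map] at h
  refine Eq.trans (Finset.sum_congr rfl fun i _ => ?_) h
  simp [onCycle, List.insertIdx_succ_cons, List.map_insertIdx]

theorem sum_neg_one_pow_mul_onCycle_rotate {A : Bimould} (hal : A.IsAlternal)
    (hpush : push A = -A) {l : List (ℂ × ℂ)} (hl : 2 ≤ l.length) {x : ℂ × ℂ}
    (hx : x.1 + (l.map Prod.fst).sum = 0) :
    ∑ i ∈ Finset.range l.length, (-1) ^ i * onCycle A (x :: l.rotate (i + 1)) = 0 := by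
  obtain ⟨y, t, rfl⟩ := List.exists_cons_of_length_pos (by omega : 0 < l.length)
  have ht : t ≠ [] := List.ne_nil_of_length_pos (by simp only [List.length_cons] at hl; omega)
  calc ∑ i ∈ Finset.range (y :: t).length, (-1) ^ i * onCycle A (x :: (y :: t).rotate (i + 1))
      = -∑ i ∈ Finset.range (t.length + 1), onCycle A ((y :: t).insertIdx (i + 1) x) := by
        rw [← Finset.sum_neg_distrib]
        refine Finset.sum_congr rfl fun i hi => ?_
        rw [onCycle_insertIdx hpush hx (by simp only [Finset.mem_range, List.length_cons] at hi ⊢; omega), pow_succ]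
        ring
    _ = 0 := by rw [hal.sum_onCycle_insertIdx_succ x y ht, neg_zero]

end Bimould

/-- a bimould concentrated in odd depth `d = 2s+1 ≥ 3` which is alternal,
odd under `neg`, and invariant under `neg ∘ push` must vanish. -/
theorem odd_depth_odd_alternal_pushneg_invariant_is_zero (A : Bimould) (s : ℕ) (hs : 1 ≤ s)
    (hconc : ∀ w : List (ℂ × ℂ), w.length ≠ 2 * s + 1 → A w = 0)
    (hal : A.IsAlternal)
    (hodd : Bimould.neg A = - A)
    (hinv : Bimould.neg (Bimould.push A) = A) :
    A = 0 := by
  have hpush := Bimould.push_eq_neg_of_neg_push_eq hodd hinv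
  funext w
  by_cases hw : w.length = 2 * s + 1
  swap
  · exact hconc w hw
  set x : ℂ × ℂ := (-(w.map Prod.fst).sum, 0)
  have hx : ∀ k, x.1 + ((w.rotate k).map Prod.fst).sum = 0 := fun k => by
    rw [List.sum_map_rotate]
    exact neg_add_cancel _
  have hper : ∀ i, w.rotate (2 * s + (i + 1)) = w.rotate i := fun i => by
    rw [show 2 * s + (i + 1) = w.length + i by omega, ← List.rotate_rotate, List.rotate_length]
  -- the alternating windows of `F` starting at `1` and, via `w.rotate (d - 1)`, at `0`
  have h₁ := Bimould.sum_neg_one_pow_mul_onCycle_rotate hal hpush (l := w) (by omega)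
    (by simpa using hx 0)
  have h₀ := Bimould.sum_neg_one_pow_mul_onCycle_rotate hal hpush (l := w.rotate (2 * s))
    (by rw [List.length_rotate]; omega) (hx _)
  simp only [List.rotate_rotate, hper, List.length_rotate, hw] at h₀
  have hF := eq_zero_of_alternating_sum_eq_zero (fun k => Bimould.onCycle A (x :: w.rotate k))
    ⟨s, rfl⟩ (by simp [← hw]) h₀ (by rwa [hw] at h₁)
  simpa [Bimould.onCycle, x] using hF
end
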